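/- arXiv:2305.01532 — 3 statements merged into one kernel-verified Lean document; each statement's English description precedes it below -/
import Mathlib

section
/- Let x₁,…,x_n ∈ [0,1) satisfy |∑_{j=1}^n e^{-2πik x_j}| ≤ ε for all integers k with 1 ≤ |k| ≤ n-1. Then for every pair of distinct indices i ≠ j, F_n(x_i - x_j) ≤ 2nε², where F_n is the Fejér kernel F_n(x) = ∑_{|k|≤n}(1-|k|/n)e^{2πikx}. -/
/-!
Writing `S k = ∑ⱼ e^{-2πik xⱼ}`, the Fejér expansion gives
`∑_{a,b} F_n(x_a - x_b) = ∑_{|k| ≤ n} (1 - |k|/n) |S k|²`. The `k = 0` term is `n²`, the terms with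
`|k| = n` have weight zero, and the remaining `2n - 2` terms are at most `ε²` each. On the other side,
`n F_n(y) = |∑_{k<n} e^{2πiky}|² ≥ 0`, so dropping all off-diagonal pairs but `(i, j)` and using
`F_n(0) = n` on the diagonal leaves `n² + F_n(x_i - x_j) ≤ n² + 2nε²`.
-/

open Real Complex

/-- The Fejér kernel `F_n(x) = ∑_{|k| ≤ n} (1 - |k|/n) e^{2πikx}`,
written in its real form. -/
noncomputable def fejer (n : ℕ) (x : ℝ) : ℝ :=
  ∑ k ∈ Finset.Icc (-(n : ℤ)) n, (1 - (|k| : ℝ) / n) * Real.cos (2 * π * (k : ℝ) * x)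

open Finset

theorem norm_sum_exp_mul_I_sq {ι : Type*} (s : Finset ι) (θ : ι → ℝ) :
    ‖∑ a ∈ s, exp (θ a * I)‖ ^ 2 = ∑ a ∈ s, ∑ b ∈ s, Real.cos (θ a - θ b) := by
  simp only [Complex.sq_norm, normSq_apply, re_sum, im_sum, exp_ofReal_mul_I_re,
    exp_ofReal_mul_I_im, sum_mul_sum, Real.cos_sub, sum_add_distrib]

theorem sum_Ico_sum_Ico_sub {M : Type*} [AddCommGroup M] (n : ℕ) (g : ℤ → M) :
    ∑ k ∈ Ico (0 : ℤ) n, ∑ l ∈ Ico (0 : ℤ) n, g (k - l)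
      = ∑ m ∈ Icc (-(n : ℤ)) n, ((n : ℤ) - |m|) • g m := by
  have shift : ∀ l : ℤ, ∑ k ∈ Ico (0 : ℤ) n, g (k - l) = ∑ m ∈ Ico (-l) (n - l), g m := by
    intro l
    rw [show Ico (-l) (n - l) = Ico (0 + -l) (n + -l) by simp [sub_eq_add_neg],
      ← map_add_right_Ico, sum_map]
    simp [sub_eq_add_neg]
  rw [sum_comm, sum_congr rfl fun l _ => shift l,
    sum_comm' (t' := Icc (-(n : ℤ)) n) (s' := fun m => Ico (max 0 (-m)) (min n (n - m)))]
  · refine sum_congr rfl fun m hm => ?_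
    rw [sum_const, Int.card_Ico, ← natCast_zsmul]
    congr 1
    rw [mem_Icc] at hm
    rcases abs_cases m with ⟨h, _⟩ | ⟨h, _⟩ <;> rw [h] <;> omega
  · intro l m
    simp only [mem_Ico, mem_Icc, lt_min_iff, max_le_iff]
    omega

theorem mul_fejer_eq_norm_sq (n : ℕ) (y : ℝ) :
    n * fejer n y = ‖∑ k ∈ Ico (0 : ℤ) n, exp ((2 * π * k * y : ℝ) * I)‖ ^ 2 := by
  rw [norm_sum_exp_mul_I_sq]
  have hcos : ∀ k l : ℤ, Real.cos (2 * π * k * y - 2 * π * l * y)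
      = Real.cos (2 * π * ((k - l : ℤ) : ℝ) * y) := fun k l => by push_cast; ring_nf
  simp only [hcos, sum_Ico_sum_Ico_sub n (fun m : ℤ => Real.cos (2 * π * m * y)), fejer,
    mul_sum, zsmul_eq_mul]
  refine sum_congr rfl fun m hm => ?_
  rcases eq_or_ne n 0 with rfl | hn
  · obtain rfl : m = 0 := by simpa using hm
    simp
  · push_cast
    field_simp

theorem fejer_nonneg (n : ℕ) (y : ℝ) : 0 ≤ fejer n y := by
  rcases eq_or_ne n 0 with rfl | hn
  · simp [fejer]
  · refine nonneg_of_mul_nonneg_right ?_ (Nat.cast_pos.mpr (Nat.pos_of_ne_zero hn))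
    rw [mul_fejer_eq_norm_sq]
    positivity

theorem fejer_zero {n : ℕ} (hn : n ≠ 0) : fejer n 0 = n := by
  have h := mul_fejer_eq_norm_sq n 0
  simp only [mul_zero, ofReal_zero, zero_mul, Complex.exp_zero, sum_const, Int.card_Ico, sub_zero,
    Int.toNat_natCast, nsmul_eq_mul, mul_one, Complex.norm_natCast] at h
  have hn' : (n : ℝ) ≠ 0 := Nat.cast_ne_zero.mpr hn
  exact mul_left_cancel₀ hn' (h.trans (sq _))

theorem sum_sum_fejer_sub {ι : Type*} (s : Finset ι) (n : ℕ) (x : ι → ℝ) :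
    ∑ a ∈ s, ∑ b ∈ s, fejer n (x a - x b)
      = ∑ k ∈ Icc (-(n : ℤ)) n,
          (1 - |(k : ℝ)| / n) * ‖∑ j ∈ s, exp (-2 * π * I * k * x j)‖ ^ 2 := by
  have hexp : ∀ (k : ℤ) (j : ι), exp (-2 * π * I * k * x j) = exp ((-(2 * π * k * x j) : ℝ) * I) :=
    fun k j => by push_cast; ring_nf
  have hcos : ∀ (k : ℤ) (a b : ι), Real.cos (-(2 * π * k * x a) - -(2 * π * k * x b))
      = Real.cos (2 * π * k * (x a - x b)) := fun k a b => by rw [← Real.cos_neg]; ring_nf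
  simp only [hexp, norm_sum_exp_mul_I_sq, hcos, fejer, mul_sum]
  rw [sum_congr rfl fun a _ => sum_comm, sum_comm]

theorem sum_diag_add_le_sum_sum {ι M : Type*} [AddCommMonoid M] [PartialOrder M]
    [IsOrderedAddMonoid M] {s : Finset ι} {f : ι → ι → M} (hf : ∀ a b, 0 ≤ f a b) {i j : ι}
    (hi : i ∈ s) (hj : j ∈ s) (hij : i ≠ j) :
    ∑ a ∈ s, f a a + f i j ≤ ∑ a ∈ s, ∑ b ∈ s, f a b := by
  classical
  rw [← sum_product', ← diag_union_offDiag, sum_union (disjoint_diag_offDiag s), sum_diag]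
  exact add_le_add_right (single_le_sum (f := fun p : ι × ι => f p.1 p.2) (fun p _ => hf _ _)
    (a := (i, j)) (mem_offDiag.2 ⟨hi, hj, hij⟩)) _

theorem sum_Icc_fejer_coeff_mul_le (n : ℕ) {a : ℤ → ℝ} {ε : ℝ} (ha : ∀ k, 0 ≤ a k)
    (hsmall : ∀ k : ℤ, 1 ≤ |k| → |k| ≤ (n : ℤ) - 1 → a k ≤ ε ^ 2) :
    ∑ k ∈ Icc (-(n : ℤ)) n, (1 - |(k : ℝ)| / n) * a k ≤ a 0 + 2 * n * ε ^ 2 := by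
  have h0 : (0 : ℤ) ∈ Icc (-(n : ℤ)) n := by simp
  have hcard : #((Icc (-(n : ℤ)) n).erase 0) = 2 * n := by
    rw [card_erase_of_mem h0, Int.card_Icc]
    omega
  rw [← add_sum_erase _ _ h0]
  refine add_le_add (by simp) ?_
  calc ∑ k ∈ (Icc (-(n : ℤ)) n).erase 0, (1 - |(k : ℝ)| / n) * a k
      ≤ ∑ _k ∈ (Icc (-(n : ℤ)) n).erase 0, ε ^ 2 := sum_le_sum fun k hk => ?_
    _ = 2 * n * ε ^ 2 := by simp [hcard]
  rw [mem_erase, mem_Icc] at hk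
  rcases lt_or_eq_of_le (abs_le.2 hk.2 : |k| ≤ n) with hlt | heq
  · refine (mul_le_of_le_one_left (ha k) ?_).trans (hsmall k ?_ (by omega))
    · have : 0 ≤ |(k : ℝ)| / n := by positivity
      linarith
    · exact Int.one_le_abs hk.1
  · have hn : (n : ℝ) ≠ 0 := by
      rintro h
      exact hk.1 (abs_eq_zero.1 (heq.trans (by exact_mod_cast h)))
    rw [← Int.cast_abs, heq, Int.cast_natCast, div_self hn, sub_self, zero_mul]
    positivity

theorem fejer_pairwise_small_general (n : ℕ) (x : Fin n → ℝ)
    (ε : ℝ)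
    (hsmall : ∀ k : ℤ, 1 ≤ |k| → |k| ≤ (n : ℤ) - 1 →
      ‖∑ j, Complex.exp (-2 * π * I * (k : ℂ) * (x j : ℂ))‖ ≤ ε) :
    ∀ i j : Fin n, i ≠ j → fejer n (x i - x j) ≤ 2 * n * ε ^ 2 := by
  intro i j hij
  have hn : n ≠ 0 := (Fin.pos i).ne'
  have hpairs : (n : ℝ) ^ 2 + fejer n (x i - x j) ≤ ∑ a, ∑ b, fejer n (x a - x b) := by
    simpa [fejer_zero hn, sq] using sum_diag_add_le_sum_sum
      (f := fun a b => fejer n (x a - x b)) (fun _ _ => fejer_nonneg _ _)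
      (mem_univ i) (mem_univ j) hij
  have hfourier : ∑ a, ∑ b, fejer n (x a - x b) ≤ n ^ 2 + 2 * n * ε ^ 2 := by
    rw [sum_sum_fejer_sub]
    simpa using sum_Icc_fejer_coeff_mul_le n (fun _ => by positivity)
      fun k h1 h2 => pow_le_pow_left₀ (norm_nonneg _) (hsmall k h1 h2) 2
  linarith

theorem fejer_pairwise_small (n : ℕ) (x : Fin n → ℝ) (hx : ∀ j, x j ∈ Set.Ico (0:ℝ) 1)
    (ε : ℝ)
    (hsmall : ∀ k : ℤ, 1 ≤ |k| → |k| ≤ (n : ℤ) - 1 →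
      ‖∑ j, Complex.exp (-2 * π * I * (k : ℂ) * (x j : ℂ))‖ ≤ ε) :
    ∀ i j : Fin n, i ≠ j → fejer n (x i - x j) ≤ 2 * n * ε ^ 2 :=
  fejer_pairwise_small_general n x ε hsmall
end

section
/- Let n be odd and let f(x) = ∑_{1≤|j|≤(n-1)/2} a_j e^{2πijx} be a real-valued trigonometric polynomial with no constant term and frequencies at most (n-1)/2 in absolute value. Then min_{0≤k≤n-1} f((k+1/2)/n) ≤ -‖f‖_{L²([0,1])} / (3n²). -/
/-!
Sampling at the `n` points `(k + θ) / n` integrates `e^{2πimx}` over `[0, 1]` exactly whenever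
`|m| < n`, since the samples are then a full geometric sum of a nontrivial `n`-th root of unity.
Both `f` (no constant term) and `f²` (frequencies below `n`) are in range, so the midpoint samples
of `f` sum to `0` and their squares sum to `n ‖f‖²`. Hence some sample has absolute value at least
`‖f‖`: if it is negative we are done, and if it is positive the zero sum forces the smallest
sample below `-‖f‖ / n`.
-/

open Real Complex Finset

theorem integral_exp_two_pi_I_int_mul (m : ℤ) :
    ∫ x in (0 : ℝ)..1, exp (2 * π * I * m * x) = if m = 0 then 1 else 0 := by
  split_ifs with hm
  · simp [hm]
  · have hc : 2 * π * I * m ≠ 0 := by simp [Real.pi_ne_zero, hm]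
    have hperiod : exp (2 * π * I * m) = 1 := Complex.exp_eq_one_iff.mpr ⟨m, by ring⟩
    simp [integral_exp_mul_complex hc, hperiod]

theorem sum_range_exp_two_pi_I_int_mul_sample_of_not_dvd {n : ℕ} (θ : ℝ) {m : ℤ}
    (hm : ¬ (n : ℤ) ∣ m) :
    ∑ k ∈ range n, exp (2 * π * I * m * (((k + θ) / n : ℝ) : ℂ)) = 0 := by
  rcases n.eq_zero_or_pos with rfl | hpos
  · simp
  have hn : (n : ℂ) ≠ 0 := Nat.cast_ne_zero.mpr hpos.ne'
  set ζ := exp (2 * π * I * m / n)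
  have hζ : ζ ≠ 1 := by
    rintro h
    obtain ⟨t, ht⟩ := Complex.exp_eq_one_iff.mp h
    refine hm ⟨t, ?_⟩
    field_simp at ht
    exact_mod_cast ht
  have hζn : ζ ^ n = 1 := by
    rw [← Complex.exp_nat_mul, Complex.exp_eq_one_iff]
    exact ⟨m, by field_simp⟩
  have hterm (k : ℕ) : exp (2 * π * I * m * (((k + θ) / n : ℝ) : ℂ))
      = exp (2 * π * I * m * θ / n) * ζ ^ k := by
    rw [← Complex.exp_nat_mul, ← Complex.exp_add]
    push_cast
    ring_nf
  rw [sum_congr rfl fun k _ => hterm k, ← mul_sum, geom_sum_eq hζ, hζn]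
  simp

theorem sum_range_exp_two_pi_I_int_mul_sample {n : ℕ} (θ : ℝ) {m : ℤ} (hm : |m| < n) :
    ∑ k ∈ range n, exp (2 * π * I * m * (((k + θ) / n : ℝ) : ℂ))
      = if m = 0 then (n : ℂ) else 0 := by
  split_ifs with h0
  · simp [h0]
  · refine sum_range_exp_two_pi_I_int_mul_sample_of_not_dvd θ fun hdvd => ?_
    exact (Int.le_of_dvd (abs_pos.mpr h0) ((dvd_abs _ _).mpr hdvd)).not_gt hm

/-- Frequencies are indexed by an arbitrary finset, so that a product of two such sums is again one
(`trigSum_mul_trigSum`). -/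
noncomputable def trigSum {ι : Type*} (s : Finset ι) (ν : ι → ℤ) (b : ι → ℂ) (x : ℝ) : ℂ :=
  ∑ i ∈ s, b i * exp (2 * π * I * ν i * x)

section trigSum

variable {ι κ : Type*} (s : Finset ι) (ν : ι → ℤ) (b : ι → ℂ)

theorem trigSum_mul_trigSum (t : Finset κ) (μ : κ → ℤ) (c : κ → ℂ) (x : ℝ) :
    trigSum s ν b x * trigSum t μ c x
      = trigSum (s ×ˢ t) (fun p => ν p.1 + μ p.2) (fun p => b p.1 * c p.2) x := by
  simp only [trigSum, sum_mul_sum, sum_product]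
  refine sum_congr rfl fun i _ => sum_congr rfl fun j _ => ?_
  push_cast
  rw [mul_add, add_mul, Complex.exp_add]
  ring

theorem integral_trigSum :
    ∫ x in (0 : ℝ)..1, trigSum s ν b x = ∑ i ∈ s with ν i = 0, b i := by
  unfold trigSum
  rw [intervalIntegral.integral_finsetSum fun i _ =>
    (by fun_prop : Continuous _).intervalIntegrable _ _]
  simp [integral_exp_two_pi_I_int_mul, sum_filter]

theorem sum_range_trigSum_sample {n : ℕ} (θ : ℝ) (hν : ∀ i ∈ s, |ν i| < n) :
    ∑ k ∈ range n, trigSum s ν b ((k + θ) / n) = n * ∑ i ∈ s with ν i = 0, b i := by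
  calc ∑ k ∈ range n, trigSum s ν b ((k + θ) / n)
      = ∑ i ∈ s, b i * ∑ k ∈ range n, exp (2 * π * I * ν i * (((k + θ) / n : ℝ) : ℂ)) := by
        simp only [trigSum, mul_sum]
        exact sum_comm
    _ = ∑ i ∈ s, b i * if ν i = 0 then (n : ℂ) else 0 :=
        sum_congr rfl fun i hi => by rw [sum_range_exp_two_pi_I_int_mul_sample θ (hν i hi)]
    _ = n * ∑ i ∈ s with ν i = 0, b i := by
        simp [sum_filter, mul_sum, mul_comm]

theorem sum_range_trigSum_sample_eq_mul_integral {n : ℕ} (θ : ℝ) (hν : ∀ i ∈ s, |ν i| < n) :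
    ∑ k ∈ range n, trigSum s ν b ((k + θ) / n) = n * ∫ x in (0 : ℝ)..1, trigSum s ν b x := by
  rw [sum_range_trigSum_sample s ν b θ hν, integral_trigSum]

end trigSum

section RealTrigSum

variable {f : ℝ → ℝ} {s : Finset ℤ} {a : ℤ → ℂ} {n : ℕ}

theorem sum_range_sample_eq_zero (hf : ∀ x, (f x : ℂ) = trigSum s id a x)
    (hs : ∀ j ∈ s, j ≠ 0 ∧ |j| < n) (θ : ℝ) : ∑ k ∈ range n, f ((k + θ) / n) = 0 := by
  have h := sum_range_trigSum_sample s id a θ fun j hj => (hs j hj).2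
  simp only [id_eq] at h
  rw [filter_eq_empty_iff.mpr fun j hj => (hs j hj).1, sum_empty, mul_zero] at h
  simp only [← hf] at h
  exact_mod_cast h

theorem sum_range_sample_sq_eq_mul_integral_sq (hf : ∀ x, (f x : ℂ) = trigSum s id a x)
    (hs : ∀ j ∈ s, 2 * |j| < n) (θ : ℝ) :
    ∑ k ∈ range n, f ((k + θ) / n) ^ 2 = n * ∫ x in (0 : ℝ)..1, f x ^ 2 := by
  have hf_sq (x : ℝ) : ((f x ^ 2 : ℝ) : ℂ)
      = trigSum (s ×ˢ s) (fun p => p.1 + p.2) (fun p => a p.1 * a p.2) x := by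
    rw [ofReal_pow, sq, hf, trigSum_mul_trigSum]
    rfl
  have h := sum_range_trigSum_sample_eq_mul_integral (n := n) (s ×ˢ s) _ (fun p => a p.1 * a p.2)
    θ fun p hp => by
      obtain ⟨hp₁, hp₂⟩ := mem_product.mp hp
      linarith [abs_add_le p.1 p.2, hs _ hp₁, hs _ hp₂]
  simp only [← hf_sq, intervalIntegral.integral_ofReal] at h
  exact_mod_cast h

end RealTrigSum

theorem Finset.exists_card_mul_le_neg_sqrt_of_sum_eq_zero {ι : Type*} {s : Finset ι}
    (hs : s.Nonempty) {y : ι → ℝ} {V : ℝ} (hsum : ∑ i ∈ s, y i = 0)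
    (hsq : ∑ i ∈ s, y i ^ 2 = #s * V) : ∃ i ∈ s, #s * y i ≤ -√V := by
  classical
  obtain ⟨i, hi, hVi⟩ : ∃ i ∈ s, V ≤ y i ^ 2 :=
    exists_le_of_sum_le hs (by simp [hsq])
  have hroot : √V ≤ |y i| := (Real.sqrt_le_sqrt hVi).trans_eq (sqrt_sq_eq_abs _)
  have hcard : (1 : ℝ) ≤ #s := by exact_mod_cast hs.card_pos
  obtain ⟨i₀, hi₀, hmin⟩ := s.exists_min_image y hs
  have hmin_nonpos : #s * y i₀ ≤ 0 := by
    simpa [hsum] using s.card_nsmul_le_sum y (y i₀) hmin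
  rcases le_abs'.mp hroot with hneg | hpos
  · exact ⟨i, hi, by nlinarith [Real.sqrt_nonneg V]⟩
  · refine ⟨i₀, hi₀, ?_⟩
    have hrest : #(s.erase i) * y i₀ ≤ ∑ j ∈ s.erase i, y j := by
      simpa using (s.erase i).card_nsmul_le_sum y (y i₀) fun j hj => hmin j (mem_of_mem_erase hj)
    have hsplit : y i + ∑ j ∈ s.erase i, y j = 0 := by rwa [add_sum_erase s y hi]
    have hcard_erase : (#(s.erase i) : ℝ) + 1 = #s := by exact_mod_cast card_erase_add_one hi
    nlinarith

theorem trig_poly_negative_at_midpoint_general (n : ℕ) (hn1 : 1 ≤ n)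
    (a : ℤ → ℂ)
    (f : ℝ → ℝ)
    (hf : ∀ x : ℝ, (f x : ℂ) =
      ∑ j ∈ (Finset.Icc (-(((n - 1) / 2 : ℕ) : ℤ)) (((n - 1) / 2 : ℕ) : ℤ)).erase 0,
        a j * Complex.exp (2 * π * I * (j : ℂ) * (x : ℂ))) :
    ∃ k : ℕ, k ≤ n - 1 ∧
      f (((k : ℝ) + 1/2) / n)
        ≤ -Real.sqrt (∫ x in (0:ℝ)..1, f x ^ 2) / (3 * (n : ℝ) ^ 2) := by
  set S := (Icc (-(((n - 1) / 2 : ℕ) : ℤ)) (((n - 1) / 2 : ℕ) : ℤ)).erase 0 with hS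
  have hfreq : ∀ j ∈ S, j ≠ 0 ∧ 2 * |j| < n := by
    intro j hj
    simp only [hS, mem_erase, mem_Icc] at hj
    exact ⟨hj.1, by rw [abs_eq_max_neg]; omega⟩
  have hmean := sum_range_sample_eq_zero hf
    (fun j hj => ⟨(hfreq j hj).1, by linarith [(hfreq j hj).2, abs_nonneg j]⟩) (1 / 2)
  have hsq := sum_range_sample_sq_eq_mul_integral_sq hf (fun j hj => (hfreq j hj).2) (1 / 2)
  obtain ⟨k, hk, hle⟩ := exists_card_mul_le_neg_sqrt_of_sum_eq_zero
    (nonempty_range_iff.mpr (by omega)) hmean (by simpa using hsq)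
  refine ⟨k, by simp at hk; omega, ?_⟩
  rw [card_range] at hle
  have hn : (1 : ℝ) ≤ n := by exact_mod_cast hn1
  calc f ((k + 1/2) / n) ≤ -√(∫ x in (0:ℝ)..1, f x ^ 2) / n := by
        rw [le_div_iff₀ (by positivity)]; linarith
    _ ≤ _ := by
        rw [neg_div, neg_div, neg_le_neg_iff]
        exact div_le_div_of_nonneg_left (sqrt_nonneg _) (by positivity) (by nlinarith)

theorem trig_poly_negative_at_midpoint (n : ℕ) (hn : Odd n) (hn1 : 1 ≤ n)
    (a : ℤ → ℂ) (hconj : ∀ j : ℤ, a (-j) = starRingEnd ℂ (a j))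
    (f : ℝ → ℝ)
    (hf : ∀ x : ℝ, (f x : ℂ) =
      ∑ j ∈ (Finset.Icc (-(((n - 1) / 2 : ℕ) : ℤ)) (((n - 1) / 2 : ℕ) : ℤ)).erase 0,
        a j * Complex.exp (2 * π * I * (j : ℂ) * (x : ℂ))) :
    ∃ k : ℕ, k ≤ n - 1 ∧
      f (((k : ℝ) + 1/2) / n)
        ≤ -Real.sqrt (∫ x in (0:ℝ)..1, f x ^ 2) / (3 * (n : ℝ) ^ 2) :=
  trig_poly_negative_at_midpoint_general n hn1 a f hf
end

section
/- Let f(x) = ∑_{1≤|j|≤n-1} a_j e^{2πijx} be a real-valued trigonometric polynomial with zero mean. Then min_{0≤x≤1} f(x) ≤ -‖f‖_{L²([0,1])}/(3√n). -/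
open Real Complex

/-! Let `m` be the minimum of the mean-zero function `f` on `[0, 1]`. Then `|f| ≤ f - 2m`, so
`‖f‖₁ ≤ -2m`, and `‖f‖₂² ≤ ‖f‖_∞ ‖f‖₁ ≤ -2m ‖f‖_∞`. For a trigonometric polynomial with at most
`2n` frequencies, Parseval and Cauchy–Schwarz give `‖f‖_∞ ≤ ∑ |a_j| ≤ √(2n) ‖f‖₂`, hence
`-m ≥ ‖f‖₂ / (2√(2n)) ≥ ‖f‖₂ / (3√n)`. -/

open MeasureTheory Set

section MinOfZeroMean

variable {g : ℝ → ℝ} {a b m : ℝ}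

theorem nonpos_of_forall_le_of_integral_eq_zero (hab : a < b)
    (hg : IntervalIntegrable g volume a b) (h0 : ∫ t in a..b, g t = 0)
    (hm : ∀ t ∈ Icc a b, m ≤ g t) : m ≤ 0 := by
  have h := intervalIntegral.integral_mono_on hab.le intervalIntegrable_const hg hm
  rw [h0, intervalIntegral.integral_const, smul_eq_mul] at h
  exact nonpos_of_mul_nonpos_right h (sub_pos.2 hab)

theorem integral_abs_le_of_integral_eq_zero (hab : a ≤ b)
    (hg : IntervalIntegrable g volume a b) (h0 : ∫ t in a..b, g t = 0)
    (hm0 : m ≤ 0) (hm : ∀ t ∈ Icc a b, m ≤ g t) :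
    ∫ t in a..b, |g t| ≤ -2 * m * (b - a) := by
  have hpt : ∀ t ∈ Icc a b, |g t| ≤ g t - 2 * m := fun t ht => by
    have := hm t ht
    rcases abs_cases (g t) with ⟨h, _⟩ | ⟨h, _⟩ <;> rw [h] <;> linarith
  calc ∫ t in a..b, |g t|
      ≤ ∫ t in a..b, (g t - 2 * m) :=
        intervalIntegral.integral_mono_on hab hg.abs (hg.sub intervalIntegrable_const) hpt
    _ = -2 * m * (b - a) := by
        rw [intervalIntegral.integral_sub hg intervalIntegrable_const, h0,
          intervalIntegral.integral_const, smul_eq_mul]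
        ring

theorem integral_sq_le_mul_integral_abs {A : ℝ} (hab : a ≤ b) (hg : Continuous g)
    (hA : ∀ t ∈ Icc a b, |g t| ≤ A) :
    ∫ t in a..b, g t ^ 2 ≤ A * ∫ t in a..b, |g t| := by
  rw [← intervalIntegral.integral_const_mul]
  refine intervalIntegral.integral_mono_on hab ((hg.pow 2).intervalIntegrable a b)
    ((continuous_const.mul hg.abs).intervalIntegrable a b) fun t ht => ?_
  rw [← sq_abs, sq]
  exact mul_le_mul_of_nonneg_right (hA t ht) (abs_nonneg _)

theorem exists_le_neg_sqrt_integral_sq_div {A C : ℝ} (hab : a < b) (hg : Continuous g)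
    (h0 : ∫ t in a..b, g t = 0) (hA : ∀ t ∈ Icc a b, |g t| ≤ A)
    (hAC : A ≤ C * √(∫ t in a..b, g t ^ 2)) :
    ∃ x ∈ Icc a b, g x ≤ -√(∫ t in a..b, g t ^ 2) / (2 * C * (b - a)) := by
  obtain ⟨x, hx, hmin⟩ := isCompact_Icc.exists_isMinOn (nonempty_Icc.2 hab.le) hg.continuousOn
  refine ⟨x, hx, ?_⟩
  have hm0 := nonpos_of_forall_le_of_integral_eq_zero hab (hg.intervalIntegrable a b) h0 hmin
  have hL1 := integral_abs_le_of_integral_eq_zero hab.le (hg.intervalIntegrable a b) h0 hm0 hmin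
  have hL2 := integral_sq_le_mul_integral_abs hab.le hg hA
  set r := √(∫ t in a..b, g t ^ 2)
  have hr : r ^ 2 = ∫ t in a..b, g t ^ 2 :=
    sq_sqrt (intervalIntegral.integral_nonneg hab.le fun t _ => sq_nonneg (g t))
  have hA0 : 0 ≤ A := (abs_nonneg _).trans (hA x hx)
  have hba : 0 < b - a := sub_pos.2 hab
  have key : r ^ 2 ≤ C * r * (-2 * g x * (b - a)) := calc
    r ^ 2 ≤ A * (-2 * g x * (b - a)) := hr ▸ hL2.trans (mul_le_mul_of_nonneg_left hL1 hA0)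
    _ ≤ C * r * (-2 * g x * (b - a)) := mul_le_mul_of_nonneg_right hAC (by nlinarith)
  rw [neg_div, le_neg]
  rcases le_or_gt C 0 with hC | hC
  · exact (div_nonpos_of_nonneg_of_nonpos (sqrt_nonneg _) (by nlinarith)).trans (by linarith)
  · rw [div_le_iff₀ (by positivity)]
    nlinarith [sqrt_nonneg (∫ t in a..b, g t ^ 2),
      mul_nonneg hC.le (mul_nonneg (neg_nonneg.2 hm0) hba.le)]

end MinOfZeroMean

noncomputable section TrigPoly

open ComplexConjugate

def trigMonomial (j : ℤ) (x : ℝ) : ℂ := exp (2 * π * I * j * x)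

def trigPoly (s : Finset ℤ) (a : ℤ → ℂ) (x : ℝ) : ℂ := ∑ j ∈ s, a j * trigMonomial j x

@[fun_prop]
theorem continuous_trigMonomial (j : ℤ) : Continuous (trigMonomial j) := by
  unfold trigMonomial; fun_prop

theorem norm_trigMonomial (j : ℤ) (x : ℝ) : ‖trigMonomial j x‖ = 1 := by
  rw [trigMonomial, show 2 * π * I * j * x = ((2 * π * j * x : ℝ) : ℂ) * I by push_cast; ring]
  exact norm_exp_ofReal_mul_I _

theorem trigMonomial_mul_conj (j k : ℤ) (x : ℝ) :
    trigMonomial j x * conj (trigMonomial k x) = trigMonomial (j - k) x := by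
  rw [trigMonomial, trigMonomial, ← exp_conj, ← Complex.exp_add]
  simp only [trigMonomial, map_mul, conj_ofReal, conj_I, map_ofNat, map_intCast]
  push_cast; ring_nf

theorem integral_trigMonomial (j : ℤ) :
    ∫ x in (0 : ℝ)..1, trigMonomial j x = if j = 0 then 1 else 0 := by
  split_ifs with hj
  · simp [trigMonomial, hj]
  · have hc : 2 * π * I * j ≠ 0 := by simp [Real.pi_ne_zero, hj]
    simp only [trigMonomial]
    rw [integral_exp_mul_complex hc, ofReal_one, ofReal_zero, mul_one, mul_zero, Complex.exp_zero,
      show 2 * π * I * j = j * (2 * π * I) by ring, exp_int_mul_two_pi_mul_I, sub_self, zero_div]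

theorem intervalIntegrable_trigMonomial_mul (j : ℤ) (c : ℂ) :
    IntervalIntegrable (fun x => c * trigMonomial j x) volume 0 1 :=
  (continuous_const.mul (continuous_trigMonomial j)).intervalIntegrable 0 1

variable (s : Finset ℤ) (a : ℤ → ℂ)

theorem continuous_trigPoly : Continuous (trigPoly s a) :=
  continuous_finsetSum _ fun j _ => continuous_const.mul (continuous_trigMonomial j)

theorem integral_trigPoly :
    ∫ x in (0 : ℝ)..1, trigPoly s a x = if 0 ∈ s then a 0 else 0 := by
  simp only [trigPoly]
  rw [intervalIntegral.integral_finsetSum fun j _ => intervalIntegrable_trigMonomial_mul j _]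
  simp only [intervalIntegral.integral_const_mul, integral_trigMonomial, mul_ite, mul_one,
    mul_zero, Finset.sum_ite_eq']

theorem norm_trigPoly_le (x : ℝ) : ‖trigPoly s a x‖ ≤ ∑ j ∈ s, ‖a j‖ :=
  (norm_sum_le _ _).trans_eq <| Finset.sum_congr rfl fun j _ => by
    rw [norm_mul, norm_trigMonomial, mul_one]

theorem integral_norm_sq_trigPoly :
    ∫ x in (0 : ℝ)..1, ‖trigPoly s a x‖ ^ 2 = ∑ j ∈ s, ‖a j‖ ^ 2 := by
  apply ofReal_injective
  have hexpand : ∀ x, ((‖trigPoly s a x‖ ^ 2 : ℝ) : ℂ) =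
      ∑ j ∈ s, ∑ k ∈ s, a j * conj (a k) * trigMonomial (j - k) x := fun x => by
    rw [ofReal_pow, ← mul_conj', trigPoly, map_sum, Finset.sum_mul_sum]
    refine Finset.sum_congr rfl fun j _ => Finset.sum_congr rfl fun k _ => ?_
    rw [map_mul, ← trigMonomial_mul_conj]; ring
  rw [← intervalIntegral.integral_ofReal, intervalIntegral.integral_congr fun x _ => hexpand x,
    intervalIntegral.integral_finsetSum fun j _ => (by fun_prop : Continuous fun x =>
      ∑ k ∈ s, a j * conj (a k) * trigMonomial (j - k) x).intervalIntegrable 0 1]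
  push_cast
  refine Finset.sum_congr rfl fun j hj => ?_
  rw [intervalIntegral.integral_finsetSum fun k _ => intervalIntegrable_trigMonomial_mul _ _]
  simp only [intervalIntegral.integral_const_mul, integral_trigMonomial, sub_eq_zero, mul_ite,
    mul_one, mul_zero, Finset.sum_ite_eq, if_pos hj, mul_conj']

end TrigPoly

theorem Finset.sum_le_sqrt_card_mul_sqrt_sum_sq {ι : Type*} (s : Finset ι) (x : ι → ℝ) :
    ∑ i ∈ s, x i ≤ √s.card * √(∑ i ∈ s, x i ^ 2) := by
  rw [← sqrt_mul (Nat.cast_nonneg _)]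
  exact (le_abs_self _).trans (abs_le_sqrt sq_sum_le_card_mul_sum_sq)

theorem card_Icc_neg_erase_zero_le (n : ℕ) :
    ((Finset.Icc (-((n : ℤ) - 1)) ((n : ℤ) - 1)).erase 0).card ≤ 2 * n := by
  have := Finset.card_erase_le (s := Finset.Icc (-((n : ℤ) - 1)) ((n : ℤ) - 1)) (a := 0)
  rw [Int.card_Icc] at this
  omega

-- `2n ≤ (3/2)² n` is where the constant `3 ≥ 2√2` of the theorem comes from.
theorem sqrt_card_Icc_neg_erase_zero_le (n : ℕ) :
    √((Finset.Icc (-((n : ℤ) - 1)) ((n : ℤ) - 1)).erase 0).card ≤ 3 / 2 * √n := by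
  have hcard : (((Finset.Icc (-((n : ℤ) - 1)) ((n : ℤ) - 1)).erase 0).card : ℝ) ≤ 2 * n := by
    exact_mod_cast card_Icc_neg_erase_zero_le n
  rw [sqrt_le_left (by positivity), mul_pow, sq_sqrt n.cast_nonneg]
  linarith [n.cast_nonneg (α := ℝ)]

theorem trig_poly_min_negative_general (n : ℕ)
    (a : ℤ → ℂ)
    (f : ℝ → ℝ)
    (hf : ∀ x : ℝ, (f x : ℂ) =
      ∑ j ∈ (Finset.Icc (-((n : ℤ) - 1)) ((n : ℤ) - 1)).erase 0,
        a j * Complex.exp (2 * π * I * (j : ℂ) * (x : ℂ))) :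
    ∃ x ∈ Set.Icc (0:ℝ) 1,
      f x ≤ -Real.sqrt (∫ t in (0:ℝ)..1, f t ^ 2) / (3 * Real.sqrt n) := by
  set s := (Finset.Icc (-((n : ℤ) - 1)) ((n : ℤ) - 1)).erase 0
  have hfP : ∀ x, (f x : ℂ) = trigPoly s a x := hf
  have hf_cont : Continuous f := by
    have h := continuous_re.comp (continuous_trigPoly s a)
    simpa only [Function.comp_def, ← hfP, ofReal_re] using h
  have hmean : ∫ t in (0:ℝ)..1, f t = 0 := by
    rw [← ofReal_inj, ← intervalIntegral.integral_ofReal]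
    simp only [hfP, integral_trigPoly, s, Finset.notMem_erase, if_false, ofReal_zero]
  have hL2 : ∫ t in (0:ℝ)..1, f t ^ 2 = ∑ j ∈ s, ‖a j‖ ^ 2 := by
    simp only [← integral_norm_sq_trigPoly, ← hfP, norm_real, Real.norm_eq_abs, sq_abs]
  have hsup : ∀ t, |f t| ≤ ∑ j ∈ s, ‖a j‖ := fun t => by
    simpa only [← hfP, norm_real, Real.norm_eq_abs] using norm_trigPoly_le s a t
  have hCS : ∑ j ∈ s, ‖a j‖ ≤ 3 / 2 * √n * √(∫ t in (0:ℝ)..1, f t ^ 2) := by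
    rw [hL2]
    exact (s.sum_le_sqrt_card_mul_sqrt_sum_sq _).trans
      (mul_le_mul_of_nonneg_right (sqrt_card_Icc_neg_erase_zero_le n) (sqrt_nonneg _))
  obtain ⟨x, hx, hfx⟩ :=
    exists_le_neg_sqrt_integral_sq_div one_pos hf_cont hmean (fun t _ => hsup t) hCS
  exact ⟨x, hx, hfx.trans_eq (by ring)⟩

theorem trig_poly_min_negative (n : ℕ) (hn : 1 ≤ n)
    (a : ℤ → ℂ) (hconj : ∀ j : ℤ, a (-j) = starRingEnd ℂ (a j))
    (f : ℝ → ℝ)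
    (hf : ∀ x : ℝ, (f x : ℂ) =
      ∑ j ∈ (Finset.Icc (-((n : ℤ) - 1)) ((n : ℤ) - 1)).erase 0,
        a j * Complex.exp (2 * π * I * (j : ℂ) * (x : ℂ))) :
    ∃ x ∈ Set.Icc (0:ℝ) 1,
      f x ≤ -Real.sqrt (∫ t in (0:ℝ)..1, f t ^ 2) / (3 * Real.sqrt n) :=
  trig_poly_min_negative_general n a f hf
end
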